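/- Let F : T^Y → T^Z be a cover between trees of spheres and let B be a branch at a vertex v which maps to a branch of T^Z. If d is the local degree of the attaching point of the edge of B at v, then the number of critical leaves in B, counted with multiplicity (each leaf a counted with multiplicity deg(a) − 1), equals d − 1. -/

import Mathlib

open scoped Classical

/-- `x` and `y` are on the same side of vertex `v` in the graph `G`
(there is a walk from `x` to `y` avoiding `v`). -/
def SameSide {V : Type*} (G : SimpleGraph V) (v x y : V) : Prop :=
  ∃ p : G.Walk x y, v ∉ p.support

/-- The branch of `s` at the vertex `v`: the connected component of `G − {v}` containing `s`. -/
def Branch {V : Type*} (G : SimpleGraph V) (v s : V) : Set V :=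
  {u | ∃ p : G.Walk s u, v ∉ p.support}

/-- The (open) annulus `]]v₁,v₂[[`, the intersection of the branches `B_{v₁}(v₂)` and
`B_{v₂}(v₁)`. -/
def Annulus {V : Type*} (G : SimpleGraph V) (v₁ v₂ : V) : Set V :=
  Branch G v₁ v₂ ∩ Branch G v₂ v₁

/-- `v` is a leaf of `G` (exactly one neighbour). -/
def IsLf {V : Type*} (G : SimpleGraph V) (v : V) : Prop := ∃! u, G.Adj v u

/-- `A` is a connected component of the subset `S` of vertices of `G`. -/
def IsCompOf {V : Type*} (G : SimpleGraph V) (A S : Set V) : Prop :=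
  A ⊆ S ∧
  (∀ a ∈ A, ∀ b ∈ A, ∃ p : G.Walk a b, ∀ x ∈ p.support, x ∈ S) ∧
  (∀ a ∈ A, ∀ u, (∃ p : G.Walk a u, ∀ x ∈ p.support, x ∈ S) → u ∈ A)

/-- A combinatorial model of a (holomorphic) cover `F : T^Y → T^Z` between trees of spheres:
a map of trees sending leaves to leaves and internal vertices to internal vertices, together
with local degrees `edeg` along edges and degrees `vdeg` of the sphere maps `f_v`, subject to
the fiber-counting condition and the local Riemann–Hurwitz relation (all critical points of
`f_v` are at attaching points of edges, since `f_v : S_v − Y_v → S_{F v} − Z_{F v}` is a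
covering map). -/
structure STCover (V W : Type*) [Fintype V] [Fintype W] where
  TY : SimpleGraph V
  TZ : SimpleGraph W
  treeY : TY.IsTree
  treeZ : TZ.IsTree
  valY : ∀ v : V, IsLf TY v ∨ (∃ a b c : V, a ≠ b ∧ b ≠ c ∧ a ≠ c ∧
    TY.Adj v a ∧ TY.Adj v b ∧ TY.Adj v c)
  F : V → W
  map_adj : ∀ {u v : V}, TY.Adj u v → TZ.Adj (F u) (F v)
  map_leaf : ∀ v : V, IsLf TY v → IsLf TZ (F v)
  map_internal : ∀ v : V, ¬ IsLf TY v → ¬ IsLf TZ (F v)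
  edeg : V → V → ℕ
  edeg_pos : ∀ {u v : V}, TY.Adj u v → 1 ≤ edeg u v
  edeg_symm : ∀ u v : V, edeg u v = edeg v u
  vdeg : V → ℕ
  vdeg_pos : ∀ v : V, 1 ≤ vdeg v
  fiber_sum : ∀ v : V, ∀ w' : W, ¬ IsLf TY v → TZ.Adj (F v) w' →
    ∑ u ∈ Finset.univ.filter (fun u => TY.Adj v u ∧ F u = w'), edeg v u = vdeg v
  RH_local : ∀ v : V, ¬ IsLf TY v →
    ∑ u ∈ Finset.univ.filter (fun u => TY.Adj v u), (edeg v u - 1) = 2 * (vdeg v - 1)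
  leaf_vdeg : ∀ v u : V, IsLf TY v → TY.Adj v u → vdeg v = edeg v u

/-- A critical leaf of a cover between trees of spheres. -/
def STCover.CritLeaf {V W : Type*} [Fintype V] [Fintype W] (C : STCover V W) (v : V) : Prop :=
  IsLf C.TY v ∧ 2 ≤ C.vdeg v

/-!
Root `T^Y` at `v` and `T^Z` at `F v`, and let `B` be the branch. Since `F(B)` is a branch at
`F v`, no vertex of `B` maps to `F v`, so every `u ∈ B` has a well-defined edge of `T^Z` pointing
towards `F v`, and the degree of `f_u` is the sum of the local degrees on the edges at `u` lying
over it. Each edge of the closure of `B` is counted this way exactly once, which gives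
`∑_{u ∈ B} deg u = ∑_{u ∈ B} deg(u, parent u)`. Summing over `B` the local Riemann–Hurwitz
relations of the internal vertices and `deg(u, parent u) = deg u` for the leaves counts every edge
twice except `{v, s}`; comparing the two identities, the internal vertices cancel and the leaves
of `B` are left with total multiplicity `deg(v, s) - 1`.
-/

namespace SimpleGraph

variable {V : Type*} {G : SimpleGraph V} {r u a b : V}

noncomputable def parent (G : SimpleGraph V) (r u : V) : V :=
  if h : ∃ x, G.Adj u x ∧ G.dist r x + 1 = G.dist r u then h.choose else u

theorem parent_self : G.parent r r = r := by
  rw [parent, dif_neg]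
  rintro ⟨x, -, hx⟩
  rw [dist_self] at hx
  omega

theorem Connected.exists_adj_dist_add_one (hG : G.Connected) (hu : u ≠ r) :
    ∃ x, G.Adj u x ∧ G.dist r x + 1 = G.dist r u := by
  obtain ⟨p, -, hp⟩ := hG.exists_path_of_dist r u
  have hnil : ¬p.Nil := Walk.not_nil_of_ne hu.symm
  have hle : G.dist r p.penultimate ≤ p.dropLast.length := dist_le _
  have hlen := Walk.length_dropLast_add_one hnil
  have htri : G.dist r u ≤ G.dist r p.penultimate + 1 :=
    ((Walk.adj_penultimate hnil).reachable.dist_triangle_right r).trans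
      (by rw [dist_eq_one_iff_adj.mpr (Walk.adj_penultimate hnil)])
  exact ⟨p.penultimate, (Walk.adj_penultimate hnil).symm, by omega⟩

theorem IsTree.parent_eq_of_adj (hG : G.IsTree) {x : V} (hux : G.Adj u x)
    (hx : G.dist r x + 1 = G.dist r u) : G.parent r u = x := by
  have hex : ∃ y, G.Adj u y ∧ G.dist r y + 1 = G.dist r u := ⟨x, hux, hx⟩
  obtain ⟨hy, hdy⟩ := hex.choose_spec
  rw [parent, dif_pos hex]
  -- two shortest paths to `u` through `x` and `y` coincide, hence so do their penultimate vertices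
  have path_through : ∀ z, G.Adj u z → G.dist r z + 1 = G.dist r u →
      ∃ p : G.Walk r u, p.IsPath ∧ p.penultimate = z := by
    intro z huz hz
    obtain ⟨q, -, hq⟩ := hG.connected.exists_path_of_dist r z
    refine ⟨q.concat huz.symm, Walk.isPath_of_length_eq_dist _ ?_, q.penultimate_concat _⟩
    rw [Walk.length_concat, hq, hz]
  obtain ⟨p, hp, hpy⟩ := path_through _ hy hdy
  obtain ⟨q, hq, hqx⟩ := path_through x hux hx
  rw [← hpy, ← hqx, (hG.existsUnique_path r u).unique hp hq]

theorem IsTree.adj_parent (hG : G.IsTree) (hu : u ≠ r) : G.Adj u (G.parent r u) := by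
  obtain ⟨x, hux, hx⟩ := hG.connected.exists_adj_dist_add_one hu
  rwa [hG.parent_eq_of_adj hux hx]

theorem IsTree.dist_parent_add_one (hG : G.IsTree) (hu : u ≠ r) :
    G.dist r (G.parent r u) + 1 = G.dist r u := by
  obtain ⟨x, hux, hx⟩ := hG.connected.exists_adj_dist_add_one hu
  rwa [hG.parent_eq_of_adj hux hx]

theorem IsTree.parent_eq_or_parent_eq (hG : G.IsTree) (hab : G.Adj a b) :
    G.parent r a = b ∨ G.parent r b = a := by
  rcases hG.dist_eq_dist_add_one_of_adj r hab with h | h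
  · exact .inl (hG.parent_eq_of_adj hab h.symm)
  · exact .inr (hG.parent_eq_of_adj hab.symm h.symm)

theorem IsTree.parent_parent_ne (hG : G.IsTree) (ha : a ≠ r) (hb : G.parent r a = b) :
    G.parent r b ≠ a := by
  intro hba
  by_cases hbr : b = r
  · exact ha (hba.symm.trans (hbr ▸ parent_self))
  have h1 := hG.dist_parent_add_one ha
  have h2 := hG.dist_parent_add_one hbr
  rw [hb] at h1
  rw [hba] at h2
  omega

theorem IsTree.parent_eq_root_of_adj (hG : G.IsTree) (har : G.Adj a r) : G.parent r a = r :=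
  (hG.parent_eq_or_parent_eq har).resolve_right fun h => har.ne (h.symm.trans parent_self)

theorem IsTree.ite_parent_add_ite_parent {M : Type*} [AddMonoid M] (hG : G.IsTree)
    (hab : G.Adj a b) (ha : a ≠ r) (m : M) :
    ((if b = G.parent r a then m else 0) + if a = G.parent r b then m else 0) = m := by
  rcases hG.parent_eq_or_parent_eq (r := r) hab with h | h
  · simp [h, (hG.parent_parent_ne ha h).symm]
  · have : b ≠ G.parent r a := fun h' => hG.parent_parent_ne ha h'.symm h
    simp [h, this]

end SimpleGraph

section Branch

open SimpleGraph Finset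

variable {V : Type*} {G : SimpleGraph V} {v s u x : V}

theorem self_mem_branch (hvs : G.Adj v s) : s ∈ Branch G v s :=
  ⟨Walk.nil, by simpa using hvs.ne⟩

theorem notMem_branch : v ∉ Branch G v s := fun ⟨p, hp⟩ => hp p.end_mem_support

theorem ne_of_mem_branch (hu : u ∈ Branch G v s) : u ≠ v :=
  ne_of_mem_of_not_mem hu notMem_branch

theorem mem_branch_of_adj (hu : u ∈ Branch G v s) (hux : G.Adj u x) (hx : x ≠ v) :
    x ∈ Branch G v s := by
  obtain ⟨p, hp⟩ := hu
  refine ⟨p.concat hux, ?_⟩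
  simp [Walk.support_concat, hp, hx.symm]

theorem SimpleGraph.IsTree.eq_of_mem_branch_of_adj (hG : G.IsTree) (hvs : G.Adj v s)
    (hu : u ∈ Branch G v s) (huv : G.Adj u v) : u = s := by
  obtain ⟨p, hp⟩ := hu
  have hv : v ∉ p.bypass.support := fun h => hp (p.support_bypass_subset_support h)
  have hpath : (Walk.cons hvs p.bypass).IsPath := p.bypass_isPath.cons hv
  simpa using hG.isAcyclic.eq_snd_of_adj_start hpath huv.symm (by simp)

theorem SimpleGraph.IsTree.parent_mem_branch (hG : G.IsTree) (hvs : G.Adj v s)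
    (hu : u ∈ Branch G v s) (hus : u ≠ s) : G.parent v u ∈ Branch G v s := by
  have hadj := hG.adj_parent (ne_of_mem_branch hu)
  exact mem_branch_of_adj hu hadj fun h => hus (hG.eq_of_mem_branch_of_adj hvs hu (h ▸ hadj))

theorem mem_branch_of_parent_eq (hu : u ∈ Branch G v s)
    (hux : G.Adj u x) (hx : G.parent v x = u) : x ∈ Branch G v s := by
  refine mem_branch_of_adj hu hux fun h => ne_of_mem_branch hu ?_
  rw [← hx, h, parent_self]

-- The edges of the closure of the branch are the `{u, parent u}` with `u` in the branch.
theorem SimpleGraph.IsTree.sum_branch_sum_adj [Fintype V] {M : Type*} [AddCommMonoid M]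
    (hG : G.IsTree) (hvs : G.Adj v s) (f : V → V → M) :
    ∑ u ∈ univ.filter (· ∈ Branch G v s), ∑ x ∈ univ.filter (G.Adj u ·), f u x =
      ∑ u ∈ univ.filter (· ∈ Branch G v s), f u (G.parent v u) +
        ∑ x ∈ (univ.filter (· ∈ Branch G v s)).erase s, f (G.parent v x) x := by
  have hsplit : ∀ u ∈ univ.filter (· ∈ Branch G v s), univ.filter (G.Adj u ·) =
      insert (G.parent v u) (univ.filter fun x => G.Adj u x ∧ G.parent v x = u) := by
    intro u hu
    have hadj := hG.adj_parent (ne_of_mem_branch (mem_filter.mp hu).2)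
    ext x
    simp only [mem_filter, mem_univ, true_and, mem_insert]
    constructor
    · intro hux
      exact (hG.parent_eq_or_parent_eq hux).imp Eq.symm (⟨hux, ·⟩)
    · rintro (rfl | ⟨hux, -⟩)
      exacts [hadj, hux]
  have hnotMem : ∀ u ∈ univ.filter (· ∈ Branch G v s),
      G.parent v u ∉ univ.filter fun x => G.Adj u x ∧ G.parent v x = u := by
    intro u hu h
    exact hG.parent_parent_ne (ne_of_mem_branch (mem_filter.mp hu).2) rfl (mem_filter.mp h).2.2
  have hchildren : ∑ u ∈ univ.filter (· ∈ Branch G v s),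
      ∑ x ∈ univ.filter (fun x => G.Adj u x ∧ G.parent v x = u), f u x =
        ∑ x ∈ (univ.filter (· ∈ Branch G v s)).erase s, ∑ u ∈ {G.parent v x}, f u x := by
    refine sum_comm' fun u x => ?_
    simp only [mem_filter, mem_univ, true_and, mem_erase, mem_singleton]
    constructor
    · rintro ⟨hu, hux, rfl⟩
      refine ⟨rfl, fun hxs => ne_of_mem_branch hu ?_, mem_branch_of_parent_eq hu hux rfl⟩
      rw [hxs, hG.parent_eq_root_of_adj hvs.symm]
    · rintro ⟨rfl, hxs, hx⟩
      exact ⟨hG.parent_mem_branch hvs hx hxs, (hG.adj_parent (ne_of_mem_branch hx)).symm, rfl⟩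
  rw [sum_congr rfl fun u hu => by rw [hsplit u hu, sum_insert (hnotMem u hu)],
    sum_add_distrib, hchildren]
  simp only [sum_singleton]

end Branch

theorem filter_adj_eq_singleton_of_isLf {V : Type*} [Fintype V] {G : SimpleGraph V} {u x : V}
    (hu : IsLf G u) (hux : G.Adj u x) : Finset.univ.filter (G.Adj u ·) = {x} := by
  ext y
  simp only [Finset.mem_filter, Finset.mem_univ, true_and, Finset.mem_singleton]
  exact ⟨(hu.unique · hux), (· ▸ hux)⟩

namespace STCover

open SimpleGraph Finset

variable {V W : Type*} [Fintype V] [Fintype W] (C : STCover V W)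

theorem vdeg_eq_sum_edeg_fiber (u : V) {w : W} (hw : C.TZ.Adj (C.F u) w) :
    C.vdeg u = ∑ x ∈ univ.filter (fun x => C.TY.Adj u x ∧ C.F x = w), C.edeg u x := by
  by_cases hu : IsLf C.TY u
  · obtain ⟨x, hux, -⟩ := id hu
    have hx : C.F x = w := (C.map_leaf u hu).unique (C.map_adj hux) hw
    rw [← filter_filter, filter_adj_eq_singleton_of_isLf hu hux, filter_singleton, if_pos hx,
      sum_singleton, C.leaf_vdeg u x hu hux]
  · exact (C.fiber_sum u w hu hw).symm

theorem sum_adj_edeg_sub_one_of_isLf {u : V} (hu : IsLf C.TY u) :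
    ∑ x ∈ univ.filter (C.TY.Adj u ·), (C.edeg u x - 1) = C.vdeg u - 1 := by
  obtain ⟨x, hux, -⟩ := id hu
  rw [filter_adj_eq_singleton_of_isLf hu hux, sum_singleton, C.leaf_vdeg u x hu hux]

-- `deg u` is read off the edge of `T^Z` at `F u` pointing towards `F v`; each edge
-- `{u, parent u}` of the closure of the branch lies over such an edge from exactly one endpoint.
theorem sum_vdeg_branch {v s : V} (hvs : C.TY.Adj v s)
    (hF : ∀ u ∈ Branch C.TY v s, C.F u ≠ C.F v) :
    ∑ u ∈ univ.filter (· ∈ Branch C.TY v s), C.vdeg u =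
      ∑ u ∈ univ.filter (· ∈ Branch C.TY v s), C.edeg u (C.TY.parent v u) := by
  set B := univ.filter (· ∈ Branch C.TY v s)
  have hsB : s ∈ B := mem_filter.mpr ⟨mem_univ s, self_mem_branch hvs⟩
  have hfiber : ∀ u ∈ B, C.vdeg u = ∑ x ∈ univ.filter (C.TY.Adj u ·),
      if C.F x = C.TZ.parent (C.F v) (C.F u) then C.edeg u x else 0 := by
    intro u hu
    rw [C.vdeg_eq_sum_edeg_fiber u (C.treeZ.adj_parent (hF u (mem_filter.mp hu).2)),
      ← sum_filter, filter_filter]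
  rw [sum_congr rfl hfiber, C.treeY.sum_branch_sum_adj hvs, ← add_sum_erase B _ hsB,
    ← add_sum_erase B _ hsB, add_assoc, ← sum_add_distrib, C.treeY.parent_eq_root_of_adj hvs.symm,
    if_pos (C.treeZ.parent_eq_root_of_adj (C.map_adj hvs).symm).symm]
  congr 1
  refine sum_congr rfl fun x hx => ?_
  have hxB := (mem_filter.mp (mem_of_mem_erase hx)).2
  rw [C.edeg_symm (C.TY.parent v x) x]
  exact C.treeZ.ite_parent_add_ite_parent
    (C.map_adj (C.treeY.adj_parent (ne_of_mem_branch hxB))) (hF x hxB) _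

theorem sum_branch_riemannHurwitz {v s : V} (hvs : C.TY.Adj v s) :
    2 * ∑ u ∈ univ.filter (fun u => u ∈ Branch C.TY v s ∧ ¬IsLf C.TY u), (C.vdeg u - 1) +
        ∑ u ∈ univ.filter (fun u => u ∈ Branch C.TY v s ∧ IsLf C.TY u), (C.vdeg u - 1) +
        (C.edeg v s - 1) =
      2 * ∑ u ∈ univ.filter (· ∈ Branch C.TY v s), (C.edeg u (C.TY.parent v u) - 1) := by
  have hsB : s ∈ univ.filter (· ∈ Branch C.TY v s) :=
    mem_filter.mpr ⟨mem_univ s, self_mem_branch hvs⟩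
  have hlocal : ∑ u ∈ univ.filter (· ∈ Branch C.TY v s),
        ∑ x ∈ univ.filter (C.TY.Adj u ·), (C.edeg u x - 1) =
      2 * ∑ u ∈ univ.filter (fun u => u ∈ Branch C.TY v s ∧ ¬IsLf C.TY u), (C.vdeg u - 1) +
        ∑ u ∈ univ.filter (fun u => u ∈ Branch C.TY v s ∧ IsLf C.TY u), (C.vdeg u - 1) := by
    rw [← sum_filter_add_sum_filter_not _ (IsLf C.TY), filter_filter, filter_filter, add_comm,
      mul_sum]
    congr 1 <;> refine sum_congr rfl fun u hu => ?_
    · exact C.RH_local u (mem_filter.mp hu).2.2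
    · exact C.sum_adj_edeg_sub_one_of_isLf (mem_filter.mp hu).2.2
  have hedges := C.treeY.sum_branch_sum_adj hvs (fun u x => C.edeg u x - 1)
  simp only [C.edeg_symm (C.TY.parent v _)] at hedges
  have hs := add_sum_erase _ (fun u => C.edeg u (C.TY.parent v u) - 1) hsB
  rw [C.treeY.parent_eq_root_of_adj hvs.symm, C.edeg_symm] at hs
  omega

end STCover

/-- if a branch `B` at `v` (attached by the edge `{v,s}`) maps to a branch, and
`d` is the local degree of the attaching point of the edge of `B` at `v`, then the number of
critical leaves in `B` counted with multiplicity (`deg(a) − 1` for each leaf `a`) is `d − 1`. -/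
theorem stmt9 {V W : Type*} [Fintype V] [Fintype W] (C : STCover V W)
    (v s : V) (hadj : C.TY.Adj v s)
    (hbr : ∃ s' : W, C.F '' Branch C.TY v s = Branch C.TZ (C.F v) s')
    (d : ℕ) (hd : d = C.edeg v s) :
    ∑ u ∈ Finset.univ.filter (fun u => u ∈ Branch C.TY v s ∧ IsLf C.TY u),
      (C.vdeg u - 1) = d - 1 := by
  obtain ⟨s', hs'⟩ := hbr
  have hF : ∀ u ∈ Branch C.TY v s, C.F u ≠ C.F v := fun u hu h =>
    notMem_branch (hs' ▸ h ▸ Set.mem_image_of_mem C.F hu)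
  have hdeg : ∑ u ∈ Finset.univ.filter (· ∈ Branch C.TY v s), (C.vdeg u - 1) =
      ∑ u ∈ Finset.univ.filter (· ∈ Branch C.TY v s), (C.edeg u (C.TY.parent v u) - 1) := by
    rw [Finset.sum_tsub_distrib _ fun u _ => C.vdeg_pos u, Finset.sum_tsub_distrib _
      fun u hu => C.edeg_pos (C.treeY.adj_parent (ne_of_mem_branch (Finset.mem_filter.mp hu).2)),
      C.sum_vdeg_branch hadj hF]
  have hsplit := Finset.sum_filter_add_sum_filter_not
    (Finset.univ.filter (· ∈ Branch C.TY v s)) (IsLf C.TY) (fun u => C.vdeg u - 1)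
  rw [Finset.filter_filter, Finset.filter_filter] at hsplit
  have hRH := C.sum_branch_riemannHurwitz hadj
  omega
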